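/- Let s be a sequence, G an episode, ρ ≥ 1 a window size, and t an integer. Then the window s[t, t+ρ−1] covers G if and only if there exists an instance i ∈ inst(G) with t ≤ first(i) and last(i) ≤ t + ρ − 1. -/

import Mathlib

/-- A sequence event: a unique id, a label (from alphabet encoded as `ℕ`),
and an integer time stamp. -/
structure SeqEvent where
  id : ℕ
  lab : ℕ
  ts : ℤ
deriving DecidableEq

/-- An event sequence: a finite collection of sequence events with distinct ids,
whose time stamps are monotone in the ids. -/
structure EventSeq where
  events : Finset SeqEvent
  id_inj : ∀ e ∈ events, ∀ f ∈ events, e.id = f.id → e = f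
  ts_mono : ∀ e ∈ events, ∀ f ∈ events, e.id ≤ f.id → e.ts ≤ f.ts

/-- An episode: a finite set of episode events (identified by ids in `ℕ`) with labels,
a finite set of graph nodes, a map from events to nodes (surjectivity and the DAG
property are recorded in `Episode.WellFormed`), and weak and proper edges. -/
structure Episode where
  events : Finset ℕ
  lab : ℕ → ℕ
  nodes : Finset ℕ
  node : ℕ → ℕ
  weak : ℕ → ℕ → Prop
  proper : ℕ → ℕ → Prop

namespace Episode

/-- An edge of the episode graph (weak or proper). -/
def edge (G : Episode) (a b : ℕ) : Prop := G.weak a b ∨ G.proper a b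

/-- `G.Desc m n` : `n` is a descendant of `m`, i.e. there is a directed path from `m` to `n`. -/
def Desc (G : Episode) (m n : ℕ) : Prop := Relation.TransGen G.edge m n

/-- `G.PDesc m n` : `n` is a proper descendant of `m`, i.e. some directed path
from `m` to `n` contains a proper edge. -/
def PDesc (G : Episode) (m n : ℕ) : Prop :=
  ∃ a b, Relation.ReflTransGen G.edge m a ∧ G.proper a b ∧ Relation.ReflTransGen G.edge b n

/-- Well-formedness of an episode: events map into the nodes, every node carries an
event, edges run between nodes, the weak and proper edges are disjoint, and the
graph is acyclic (a DAG). -/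
structure WellFormed (G : Episode) : Prop where
  node_mem : ∀ e ∈ G.events, G.node e ∈ G.nodes
  node_surj : ∀ n ∈ G.nodes, ∃ e ∈ G.events, G.node e = n
  weak_mem : ∀ a b, G.weak a b → a ∈ G.nodes ∧ b ∈ G.nodes
  proper_mem : ∀ a b, G.proper a b → a ∈ G.nodes ∧ b ∈ G.nodes
  weak_proper_disjoint : ∀ a b, G.weak a b → G.proper a b → False
  acyclic : ∀ n, ¬ G.Desc n n

/-- The transitive closure of an episode: add an edge from every node to each of its
descendants, proper if the descendant is a proper descendant, weak otherwise. -/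
def tcl (G : Episode) : Episode :=
  { G with
    proper := fun a b => G.PDesc a b
    weak := fun a b => G.Desc a b ∧ ¬ G.PDesc a b }

/-- An episode is transitively closed if it coincides with its transitive closure. -/
def TransClosed (G : Episode) : Prop :=
  (∀ a b, G.proper a b ↔ G.PDesc a b) ∧
  (∀ a b, G.weak a b ↔ (G.Desc a b ∧ ¬ G.PDesc a b))

end Episode

/-- `m` is a coverage mapping of episode `G` into sequence `s`: an injective map from
the episode events into the sequence events preserving labels, mapping events of one
node to a common time stamp, and respecting weak and proper edges. -/
def IsCoverMap (s : EventSeq) (G : Episode) (m : ℕ → SeqEvent) : Prop :=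
  (∀ e ∈ G.events, m e ∈ s.events) ∧
  Set.InjOn m ↑G.events ∧
  (∀ e ∈ G.events, (m e).lab = G.lab e) ∧
  (∀ e ∈ G.events, ∀ f ∈ G.events, G.node e = G.node f → (m e).ts = (m f).ts) ∧
  (∀ e ∈ G.events, ∀ f ∈ G.events, G.Desc (G.node f) (G.node e) → (m f).ts ≤ (m e).ts) ∧
  (∀ e ∈ G.events, ∀ f ∈ G.events, G.PDesc (G.node f) (G.node e) → (m f).ts < (m e).ts)

/-- A sequence `s` covers an episode `G`. -/
def Covers (s : EventSeq) (G : Episode) : Prop := ∃ m, IsCoverMap s G m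

/-- `G ⪯ H` : every sequence covering `H` also covers `G`. -/
def Subepisode (G H : Episode) : Prop := ∀ s : EventSeq, Covers s H → Covers s G

/-- `G ∼ H` : `G ⪯ H` and `H ⪯ G`. -/
def EpisodeSimilar (G H : Episode) : Prop := Subepisode G H ∧ Subepisode H G

/-- The window `s[i, j]`: the subsequence of events with time stamps in `[i, j]`. -/
def EventSeq.window (s : EventSeq) (i j : ℤ) : EventSeq where
  events := s.events.filter (fun e => i ≤ e.ts ∧ e.ts ≤ j)
  id_inj := fun e he f hf h =>
    s.id_inj e (Finset.mem_filter.mp he).1 f (Finset.mem_filter.mp hf).1 h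
  ts_mono := fun e he f hf h =>
    s.ts_mono e (Finset.mem_filter.mp he).1 f (Finset.mem_filter.mp hf).1 h

/-- The support `fr(G; s)` with window size `ρ`: the number of integers `t` such that
the window `s[t, t + ρ - 1]` covers `G` (as an extended natural number). -/
noncomputable def support (ρ : ℤ) (s : EventSeq) (G : Episode) : ℕ∞ :=
  {t : ℤ | Covers (s.window t (t + ρ - 1)) G}.encard

/-- `first(i)` : the smallest time stamp in the range of the instance. -/
noncomputable def instFirst (G : Episode) (m : ℕ → SeqEvent) : ℤ :=
  sInf ((fun e => (m e).ts) '' ↑G.events)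

/-- `last(i)` : the largest time stamp in the range of the instance. -/
noncomputable def instLast (G : Episode) (m : ℕ → SeqEvent) : ℤ :=
  sSup ((fun e => (m e).ts) '' ↑G.events)

/-- `m` is an instance of `G` in `s` (with window size `ρ`): a coverage mapping of `G`
into `s` such that no used sequence event can be replaced by an unused one with the same
label, the same time stamp and a smaller id, and whose span is less than `ρ`. -/
def IsInstance (ρ : ℤ) (s : EventSeq) (G : Episode) (m : ℕ → SeqEvent) : Prop :=
  IsCoverMap s G m ∧
  (∀ e ∈ G.events, ∀ f ∈ s.events, (∀ e' ∈ G.events, m e' ≠ f) →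
      f.lab = (m e).lab → f.ts = (m e).ts → ¬ f.id < (m e).id) ∧
  instLast G m - instFirst G m ≤ ρ - 1

/-!
A cover of the window `s[t, t + ρ - 1]` is a cover of `s` with all time stamps in the window,
so its span is below `ρ`; only the minimality condition of an instance can fail. Among all
injective maps into `s` with the same labels and time stamps, take one with the least sum of
ids: trading a used event for an unused one with the same label and time stamp but a smaller
id would lower that sum.
-/

open Function

theorem Finset.sum_update_lt {ι α M : Type*} [DecidableEq ι] [AddCommMonoid M] [PartialOrder M]
    [IsOrderedCancelAddMonoid M] {s : Finset ι} {i : ι} (hi : i ∈ s) (g : ι → α) (w : α → M)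
    {a : α} (h : w a < w (g i)) :
    ∑ x ∈ s, w (update g i a x) < ∑ x ∈ s, w (g x) := by
  have hcomp : ∀ x, w (update g i a x) = update (w ∘ g) i (w a) x :=
    fun x => congrFun (comp_update w g i a) x
  simp only [hcomp]
  rw [Finset.sum_update_of_mem hi, Finset.sum_eq_add_sum_sdiff_singleton_of_mem hi]
  exact add_lt_add_left h _

theorem EventSeq.mem_window_events {s : EventSeq} {i j : ℤ} {e : SeqEvent} :
    e ∈ (s.window i j).events ↔ e ∈ s.events ∧ i ≤ e.ts ∧ e.ts ≤ j :=
  Finset.mem_filter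

section Span

variable {G : Episode} {m : ℕ → SeqEvent} {t : ℤ}

theorem le_instFirst_iff (hne : G.events.Nonempty) :
    t ≤ instFirst G m ↔ ∀ e ∈ G.events, t ≤ (m e).ts := by
  have hfin := (G.events.finite_toSet).image fun e => (m e).ts
  rw [instFirst, le_csInf_iff hfin.bddBelow (hne.to_set.image _)]
  exact Set.forall_mem_image

theorem instLast_le_iff (hne : G.events.Nonempty) :
    instLast G m ≤ t ↔ ∀ e ∈ G.events, (m e).ts ≤ t := by
  have hfin := (G.events.finite_toSet).image fun e => (m e).ts
  rw [instLast, csSup_le_iff hfin.bddAbove (hne.to_set.image _)]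
  exact Set.forall_mem_image

end Span

theorem isCoverMap_window_iff {s : EventSeq} {G : Episode} {m : ℕ → SeqEvent} {i j : ℤ} :
    IsCoverMap (s.window i j) G m ↔
      IsCoverMap s G m ∧ ∀ e ∈ G.events, i ≤ (m e).ts ∧ (m e).ts ≤ j := by
  simp only [IsCoverMap, EventSeq.mem_window_events]
  constructor
  · rintro ⟨hmem, hrest⟩
    exact ⟨⟨fun e he => (hmem e he).1, hrest⟩, fun e he => (hmem e he).2⟩
  · rintro ⟨⟨hmem, hrest⟩, hwin⟩
    exact ⟨fun e he => ⟨hmem e he, hwin e he⟩, hrest⟩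

def IsReassignment (s : EventSeq) (G : Episode) (m m' : ℕ → SeqEvent) : Prop :=
  (∀ e ∈ G.events, m' e ∈ s.events) ∧ Set.InjOn m' ↑G.events ∧
    ∀ e ∈ G.events, (m' e).lab = (m e).lab ∧ (m' e).ts = (m e).ts

namespace IsReassignment

variable {s : EventSeq} {G : Episode} {m m' : ℕ → SeqEvent}

theorem refl_of_isCoverMap (hm : IsCoverMap s G m) : IsReassignment s G m m :=
  ⟨hm.1, hm.2.1, fun _ _ => ⟨rfl, rfl⟩⟩

theorem isCoverMap {s' : EventSeq} (h : IsReassignment s G m m') (hm : IsCoverMap s' G m) :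
    IsCoverMap s G m' := by
  obtain ⟨-, -, hlab, hnode, hdesc, hpdesc⟩ := hm
  obtain ⟨hmem, hinj, hsame⟩ := h
  have hts : ∀ e ∈ G.events, (m' e).ts = (m e).ts := fun e he => (hsame e he).2
  refine ⟨hmem, hinj, fun e he => (hsame e he).1.trans (hlab e he), ?_, ?_, ?_⟩
  · intro e he f hf h; rw [hts e he, hts f hf]; exact hnode e he f hf h
  · intro e he f hf h; rw [hts e he, hts f hf]; exact hdesc e he f hf h
  · intro e he f hf h; rw [hts e he, hts f hf]; exact hpdesc e he f hf h

theorem update (h : IsReassignment s G m m') {e : ℕ} (he : e ∈ G.events) {f : SeqEvent}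
    (hf : f ∈ s.events) (hunused : ∀ e' ∈ G.events, m' e' ≠ f)
    (hlab : f.lab = (m' e).lab) (hts : f.ts = (m' e).ts) :
    IsReassignment s G m (update m' e f) := by
  obtain ⟨hmem, hinj, hsame⟩ := h
  refine ⟨?_, ?_, ?_⟩
  · intro x hx
    rcases eq_or_ne x e with rfl | hxe
    · simpa using hf
    · simpa [update_of_ne hxe] using hmem x hx
  · intro x hx y hy hxy
    rcases eq_or_ne x e with rfl | hxe <;> rcases eq_or_ne y x with rfl | hyx
    · rfl
    · rw [update_self, update_of_ne hyx] at hxy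
      exact absurd hxy.symm (hunused y hy)
    · rfl
    rcases eq_or_ne y e with rfl | hye
    · rw [update_self, update_of_ne hxe] at hxy
      exact absurd hxy (hunused x hx)
    · rw [update_of_ne hxe, update_of_ne hye] at hxy
      exact hinj hx hy hxy
  · intro x hx
    rcases eq_or_ne x e with rfl | hxe
    · simpa [hlab, hts] using hsame x hx
    · simpa [update_of_ne hxe] using hsame x hx

theorem exists_minimal (h : IsReassignment s G m m') :
    ∃ m'', IsReassignment s G m m'' ∧
      ∀ e ∈ G.events, ∀ f ∈ s.events, (∀ e' ∈ G.events, m'' e' ≠ f) →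
        f.lab = (m'' e).lab → f.ts = (m'' e).ts → ¬ f.id < (m'' e).id := by
  obtain ⟨m'', hm'', hmin⟩ := (measure fun m'' : ℕ → SeqEvent => ∑ e ∈ G.events, (m'' e).id).wf
    |>.has_min {m'' | IsReassignment s G m m''} ⟨m', h⟩
  exact ⟨m'', hm'', fun e he f hf hunused hlab hts hid =>
    hmin (Function.update m'' e f) (hm''.update he hf hunused hlab hts)
      (Finset.sum_update_lt he m'' SeqEvent.id hid)⟩

end IsReassignment

theorem window_covers_iff_instance_general (s : EventSeq) (G : Episode)
    (hne : G.events.Nonempty)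
    (ρ : ℤ) (t : ℤ) :
    Covers (s.window t (t + ρ - 1)) G ↔
      ∃ m, IsInstance ρ s G m ∧ t ≤ instFirst G m ∧ instLast G m ≤ t + ρ - 1 := by
  constructor
  · rintro ⟨m, hm⟩
    obtain ⟨hcov, hwin⟩ := isCoverMap_window_iff.mp hm
    obtain ⟨m', hre, hminimal⟩ := (IsReassignment.refl_of_isCoverMap hcov).exists_minimal
    have hts : ∀ e ∈ G.events, (m' e).ts = (m e).ts := fun e he => (hre.2.2 e he).2
    have hfirst : t ≤ instFirst G m' :=
      (le_instFirst_iff hne).mpr fun e he => hts e he ▸ (hwin e he).1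
    have hlast : instLast G m' ≤ t + ρ - 1 :=
      (instLast_le_iff hne).mpr fun e he => hts e he ▸ (hwin e he).2
    exact ⟨m', ⟨hre.isCoverMap hcov, hminimal, by omega⟩, hfirst, hlast⟩
  · rintro ⟨m, ⟨hcov, -, -⟩, hfirst, hlast⟩
    refine ⟨m, isCoverMap_window_iff.mpr ⟨hcov, fun e he => ⟨?_, ?_⟩⟩⟩
    · exact (le_instFirst_iff hne).mp hfirst e he
    · exact (instLast_le_iff hne).mp hlast e he

/-- the window `s[t, t + ρ - 1]` covers `G` if and only if there is an
instance `i ∈ inst(G)` with `t ≤ first(i)` and `last(i) ≤ t + ρ - 1`. -/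
theorem window_covers_iff_instance (s : EventSeq) (G : Episode)
    (hG : G.WellFormed) (hne : G.events.Nonempty)
    (ρ : ℤ) (hρ : 1 ≤ ρ) (t : ℤ) :
    Covers (s.window t (t + ρ - 1)) G ↔
      ∃ m, IsInstance ρ s G m ∧ t ≤ instFirst G m ∧ instLast G m ≤ t + ρ - 1 :=
  window_covers_iff_instance_general s G hne ρ t
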